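/- arXiv:2012.05635 — 3 statements merged into one kernel-verified Lean document; each statement's English description precedes it below -/
import Mathlib

section
/- Let K and h be Hilbert spaces, with κ = (e_i)_{i∈I} an orthonormal basis for h. Define the κ-Schur product of R, T ∈ B(K ⊗ h) as the operator R ⊙ T whose matrix components satisfy ⟨e_i-component⟩: E^{e_i}(R ⊙ T)E_{e_j} = (E^{e_i} R E_{e_j})(E^{e_i} T E_{e_j}). If R ≥ 0 and T = I_K ⊗ T₀ for some T₀ ∈ B(h) with T ≥ 0, then R ⊙ T ≥ 0. -/
/-!
Write `x = ∑ i, E i (g i)` for `x` in the dense span of the ranges of the `E i`. The amplification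
hypothesis makes each block `E i* T E j` a scalar `c i j`, so
`⟪x, P x⟫ = ∑ i j, c i j * ⟪E i (g i), R (E j (g j))⟫`. Both `(c i j)` and
`(⟪E i (g i), R (E j (g j))⟫)` are positive semidefinite matrices, hence so is their Hadamard
product (Schur product theorem), and the sum of its entries is nonnegative. Positivity of the
quadratic form then extends from the dense span to all of `HK` by continuity.
-/

open ContinuousLinearMap
open scoped ComplexOrder InnerProductSpace

namespace ContinuousLinearMap

variable {𝕜 E n : Type*} [RCLike 𝕜] [NormedAddCommGroup E] [InnerProductSpace 𝕜 E]
  [Fintype n]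

theorem IsPositive.posSemidef_inner_apply {T : E →L[𝕜] E} (hT : T.IsPositive) (v : n → E) :
    (Matrix.of fun i j ↦ ⟪v i, T (v j)⟫_𝕜).PosSemidef := by
  refine .of_dotProduct_mulVec_nonneg (Matrix.ext fun i j ↦ ?_) fun x ↦ ?_
  · simpa using hT.isSymmetric (v i) (v j)
  · convert hT.inner_nonneg_right (∑ i, x i • v i) using 1
    simp only [dotProduct, Matrix.mulVec, Matrix.of_apply, Pi.star_apply, map_sum, map_smul,
      sum_inner, inner_sum, inner_smul_left, inner_smul_right, Finset.mul_sum, RCLike.star_def]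
    rw [Finset.sum_comm]
    exact Finset.sum_congr rfl fun i _ ↦ Finset.sum_congr rfl fun j _ ↦ by ring

theorem IsPositive.sum_inner_mul_inner_nonneg {R T : E →L[𝕜] E} (hR : R.IsPositive)
    (hT : T.IsPositive) (u v : n → E) :
    0 ≤ ∑ i, ∑ j, ⟪u i, R (u j)⟫_𝕜 * ⟪v i, T (v j)⟫_𝕜 := by
  have hschur := (hR.posSemidef_inner_apply u).hadamard (hT.posSemidef_inner_apply v)
  simpa [dotProduct, Matrix.mulVec] using hschur.dotProduct_mulVec_nonneg 1

theorem isPositive_of_dense_inner_nonneg {H : Type*} [NormedAddCommGroup H]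
    [InnerProductSpace ℂ H] {P : H →L[ℂ] H} {S : Set H} (hS : Dense S)
    (hP : ∀ x ∈ S, 0 ≤ ⟪x, P x⟫_ℂ) : P.IsPositive := by
  have hnonneg : ∀ x, 0 ≤ ⟪x, P x⟫_ℂ :=
    hS.induction hP (isClosed_le continuous_const (continuous_id.inner P.continuous))
  refine (isPositive_iff_complex P).mpr fun x ↦ ?_
  have hsymm : ⟪P x, x⟫_ℂ = ⟪x, P x⟫_ℂ := by
    rw [← inner_conj_symm]
    exact (IsSelfAdjoint.of_nonneg (hnonneg x)).star_eq
  obtain ⟨hre, him⟩ := RCLike.nonneg_iff.mp (hnonneg x)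
  rw [hsymm]
  exact ⟨RCLike.ext (by simp) (by simpa using him.symm), hre⟩

end ContinuousLinearMap

section Amplification

variable {I K HK : Type*} [NormedAddCommGroup K] [InnerProductSpace ℂ K] [CompleteSpace K]
    [NormedAddCommGroup HK] [InnerProductSpace ℂ HK] [CompleteSpace HK]

theorem inner_apply_apply_eq_inner_adjoint_comp_comp (F G : K →L[ℂ] HK) (T : HK →L[ℂ] HK)
    (a b : K) : ⟪F a, T (G b)⟫_ℂ = ⟪a, (adjoint F ∘L T ∘L G) b⟫_ℂ := by
  simp [adjoint_inner_right]

theorem inner_nonneg_of_mem_iSup_range (E : I → (K →L[ℂ] HK)) {R T P : HK →L[ℂ] HK}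
    (hR : R.IsPositive) (hT : T.IsPositive)
    (hTamp : ∀ i j, ∃ c : ℂ, (adjoint (E i)) ∘L T ∘L E j = c • (1 : K →L[ℂ] K))
    (hP : ∀ i j, (adjoint (E i)) ∘L P ∘L E j
        = ((adjoint (E i)) ∘L R ∘L E j) * ((adjoint (E i)) ∘L T ∘L E j))
    {x : HK} (hx : x ∈ ⨆ i, LinearMap.range ((E i : K →L[ℂ] HK) : K →ₗ[ℂ] HK)) :
    0 ≤ ⟪x, P x⟫_ℂ := by
  rcases subsingleton_or_nontrivial K with hK | hK
  · simp_all [Subsingleton.elim (E _) 0]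
  obtain ⟨u, hu⟩ := exists_norm_eq K zero_le_one
  -- Testing the scalar block `E i* T E j = c • 1` against a unit vector `u` exhibits the matrix
  -- of scalars as a compression of `T`, which is what makes it positive semidefinite.
  have hblock : ∀ i j a b,
      ⟪E i a, P (E j b)⟫_ℂ = ⟪E i u, T (E j u)⟫_ℂ * ⟪E i a, R (E j b)⟫_ℂ := by
    intro i j a b
    obtain ⟨c, hc⟩ := hTamp i j
    have hcu : ⟪E i u, T (E j u)⟫_ℂ = c := by
      simp [inner_apply_apply_eq_inner_adjoint_comp_comp, hc, inner_self_eq_norm_sq_to_K, hu]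
    simp [hcu, inner_apply_apply_eq_inner_adjoint_comp_comp (E i) (E j), hP, hc]
  obtain ⟨f, hf, rfl⟩ := (Submodule.mem_iSup_iff_exists_finsupp _ _).mp hx
  choose g hg using hf
  simp only [ContinuousLinearMap.coe_coe] at hg
  rw [Finsupp.sum, ← Finset.sum_coe_sort]
  simp only [map_sum, inner_sum, sum_inner, ← hg, hblock]
  rw [Finset.sum_comm]
  exact IsPositive.sum_inner_mul_inner_nonneg hT hR _ _

end Amplification

/-- `HK` plays the role of `K ⊗ h` through the embeddings `E i = I_K ⊗ |e i⟩`, and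
`T = I_K ⊗ T₀` is encoded by every block `E i* T E j` being a scalar multiple of `I_K`. -/
theorem schur_product_positive_general {I : Type*} {K HK : Type*}
    [NormedAddCommGroup K] [InnerProductSpace ℂ K] [CompleteSpace K]
    [NormedAddCommGroup HK] [InnerProductSpace ℂ HK] [CompleteSpace HK]
    (E : I → (K →L[ℂ] HK))
    (htotal : (⨆ i, LinearMap.range ((E i : K →L[ℂ] HK) : K →ₗ[ℂ] HK)).topologicalClosure = ⊤)
    (R T P : HK →L[ℂ] HK)
    (hR : R.IsPositive)
    (hT : T.IsPositive)
    (hTamp : ∀ i j, ∃ c : ℂ, (adjoint (E i)) ∘L T ∘L E j = c • (1 : K →L[ℂ] K))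
    (hP : ∀ i j, (adjoint (E i)) ∘L P ∘L E j
        = ((adjoint (E i)) ∘L R ∘L E j) * ((adjoint (E i)) ∘L T ∘L E j)) :
    P.IsPositive :=
  isPositive_of_dense_inner_nonneg (Submodule.dense_iff_topologicalClosure_eq_top.mpr htotal)
    fun _ hx ↦ inner_nonneg_of_mem_iSup_range E hR hT hTamp hP hx

/-- Positivity of the `κ`-Schur product.  The Hilbert space `K ⊗ h` is realised as a
Hilbert space `HK` equipped with a family of embeddings `E i = I_K ⊗ |e i⟩` (for `κ = (e i)`
an orthonormal basis of `h`) which are mutually orthogonal isometries with total joint range.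
If `P` is the κ-Schur product of `R` and `T`, i.e. `E i* P (E j) = (E i* R E j)(E i* T E j)`
for all `i, j`, and if `R ≥ 0` and `T = I_K ⊗ T₀ ≥ 0` (the latter expressed by saying that
every matrix component `E i* T E j` is a scalar multiple of the identity), then `P ≥ 0`. -/
theorem schur_product_positive {I : Type*} [DecidableEq I] {K HK : Type*}
    [NormedAddCommGroup K] [InnerProductSpace ℂ K] [CompleteSpace K]
    [NormedAddCommGroup HK] [InnerProductSpace ℂ HK] [CompleteSpace HK]
    (E : I → (K →L[ℂ] HK))
    (horth : ∀ i j, (adjoint (E i)) ∘L E j = if i = j then (1 : K →L[ℂ] K) else 0)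
    (htotal : (⨆ i, LinearMap.range ((E i : K →L[ℂ] HK) : K →ₗ[ℂ] HK)).topologicalClosure = ⊤)
    (R T P : HK →L[ℂ] HK)
    (hR : R.IsPositive)
    (hT : T.IsPositive)
    (hTamp : ∀ i j, ∃ c : ℂ, (adjoint (E i)) ∘L T ∘L E j = c • (1 : K →L[ℂ] K))
    (hP : ∀ i j, (adjoint (E i)) ∘L P ∘L E j
        = ((adjoint (E i)) ∘L R ∘L E j) * ((adjoint (E i)) ∘L T ∘L E j)) :
    P.IsPositive :=
  schur_product_positive_general E htotal R T P hR hT hTamp hP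
end

section
/- Let A be a unital C*-algebra, k̂ a Hilbert space, ι : A → A ⊗ B(k̂) the ampliation a ↦ a ⊗ I, Δ an orthogonal projection in B(k̂) (ampliated), and φ : A₀ → A ⊗ B(k̂) a linear map on a *-subalgebra A₀ ∋ 1 satisfying φ = φ† (hermitian), φ(1) = 0, and φ(ab) = φ(a)ι(b) + ι(a)φ(b) + φ(a)Δφ(b) for all a,b ∈ A₀. Then for every positive normal functional ω on B(k̂), the map μ = (id_A ⊗ ω) ∘ φ is hermitian, vanishes at 1, and satisfies μ(a*a) − μ(a)*a − a*μ(a) ≥ 0 for all a ∈ A₀. -/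
lemma pos_map_star'
    {A : Type*} [NormedRing A] [StarRing A] [CStarRing A] [NormedAlgebra ℂ A]
    [CompleteSpace A] [StarModule ℂ A] [PartialOrder A] [StarOrderedRing A]
    {B : Type*} [NormedRing B] [StarRing B] [CStarRing B] [NormedAlgebra ℂ B]
    [CompleteSpace B] [StarModule ℂ B] [PartialOrder B] [StarOrderedRing B]
    (E : B →ₗ[ℂ] A) (hEpos : ∀ x : B, 0 ≤ x → 0 ≤ E x) (x : B) :
    E (star x) = star (E x) := by
  letI : CStarAlgebra B := { }
  have hsa : ∀ y : B, IsSelfAdjoint y → IsSelfAdjoint (E y) := by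
    intro y hy
    have h := CFC.posPart_sub_negPart y hy
    rw [← h, map_sub]
    exact ((hEpos _ (CFC.posPart_nonneg y)).isSelfAdjoint.sub
      (hEpos _ (CFC.negPart_nonneg y)).isSelfAdjoint)
  have hre := hsa (realPart x) (realPart x).2
  have him := hsa (imaginaryPart x) (imaginaryPart x).2
  have hx : (realPart x : B) + Complex.I • (imaginaryPart x : B) = x :=
    realPart_add_I_smul_imaginaryPart x
  calc E (star x) = E (star ((realPart x : B) + Complex.I • (imaginaryPart x : B))) := by rw [hx]
    _ = E (realPart x) - Complex.I • E (imaginaryPart x) := by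
        rw [star_add, star_smul, (realPart x).2.star_eq, (imaginaryPart x).2.star_eq]
        simp [map_add, map_smul, Complex.star_def, Complex.conj_I, sub_eq_add_neg]
    _ = star (E ((realPart x : B) + Complex.I • (imaginaryPart x : B))) := by
        rw [map_add, map_smul, star_add, star_smul, hre.star_eq, him.star_eq,
          Complex.star_def, Complex.conj_I, neg_smul, sub_eq_add_neg]
    _ = star (E x) := by rw [hx]


/-- Let `A` be a unital C⋆-algebra, `B` a unital C⋆-algebra playing the role of the matrix
space `A ⊗ B(k̂)`, `ι : A → B` the ampliation `a ↦ a ⊗ I`, and `Δ ∈ B` an (ampliated)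
orthogonal projection commuting with the range of `ι`.  Let `φ` be a linear map on a
⋆-subalgebra `A₀ ∋ 1` of `A`, with values in `B`, which is hermitian, vanishes at `1`, and
satisfies `φ(ab) = φ(a)ι(b) + ι(a)φ(b) + φ(a)Δφ(b)`.  Then for any positive normal
functional `ω` on `B(k̂)` — whose slice map `E = id_A ⊗ ω : B → A` is a positive
`A`-bimodule map — the map `μ = E ∘ φ` is hermitian, vanishes at `1`, and satisfies
`μ(a*a) − μ(a)* a − a* μ(a) ≥ 0` for all `a ∈ A₀`. -/
theorem structure_map_slice_conditionally_positive
    {A : Type*} [NormedRing A] [StarRing A] [CStarRing A] [NormedAlgebra ℂ A]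
    [CompleteSpace A] [StarModule ℂ A] [PartialOrder A] [StarOrderedRing A]
    {B : Type*} [NormedRing B] [StarRing B] [CStarRing B] [NormedAlgebra ℂ B]
    [CompleteSpace B] [StarModule ℂ B] [PartialOrder B] [StarOrderedRing B]
    (ι : A →⋆ₐ[ℂ] B)
    (Δ : B) (hΔstar : star Δ = Δ) (hΔidem : Δ * Δ = Δ)
    (hΔcomm : ∀ a : A, Δ * ι a = ι a * Δ)
    (A₀ : StarSubalgebra ℂ A)
    (φ : A₀ →ₗ[ℂ] B)
    (hherm : ∀ a : A₀, φ (star a) = star (φ a))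
    (hone : φ 1 = 0)
    (hmult : ∀ a b : A₀, φ (a * b) = φ a * ι (b : A) + ι (a : A) * φ b + φ a * Δ * φ b)
    (E : B →ₗ[ℂ] A)
    (hEpos : ∀ x : B, 0 ≤ x → 0 ≤ E x)
    (hEl : ∀ (x : B) (a : A), E (ι a * x) = a * E x)
    (hEr : ∀ (x : B) (a : A), E (x * ι a) = E x * a) :
    (∀ a : A₀, E (φ (star a)) = star (E (φ a))) ∧
    E (φ 1) = 0 ∧
    (∀ a : A₀, 0 ≤ E (φ (star a * a)) - star (E (φ a)) * (a : A) - star (a : A) * E (φ a)) := by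
  have hEstar : ∀ x : B, E (star x) = star (E x) := pos_map_star' E hEpos
  have hmu_herm : ∀ a : A₀, E (φ (star a)) = star (E (φ a)) := by
    intro a
    rw [hherm, hEstar]
  refine ⟨hmu_herm, by rw [hone, map_zero], fun a => ?_⟩
  have hexp : E (φ (star a * a)) =
      star (E (φ a)) * (a : A) + star (a : A) * E (φ a)
        + E (star (Δ * φ a) * (Δ * φ a)) := by
    have h3 : star (φ a) * Δ * φ a = star (Δ * φ a) * (Δ * φ a) := by
      rw [star_mul, hΔstar]
      simp only [mul_assoc]
      rw [← mul_assoc Δ Δ, hΔidem]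
    have h1 : φ (star a * a) = star (φ a) * ι ((a : A)) + ι (star (a : A)) * φ a
        + star (Δ * φ a) * (Δ * φ a) := by
      rw [hmult (star a) a, hherm, ← h3]
      rfl
    rw [h1, map_add, map_add, hEr, hEl, hEstar]
  rw [hexp]
  have hpos : 0 ≤ E (star (Δ * φ a) * (Δ * φ a)) :=
    hEpos _ (star_mul_self_nonneg _)
  calc (0 : A) ≤ E (star (Δ * φ a) * (Δ * φ a)) := hpos
    _ = star (E (φ a)) * (a : A) + star (a : A) * E (φ a)
        + E (star (Δ * φ a) * (Δ * φ a)) - star (E (φ a)) * (a : A)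
        - star (a : A) * E (φ a) := by abel
end

section
/- Let φ : A₀ → A ⊗ B(k̂) be a structure map (hermitian, φ(1)=0, φ(ab) = φ(a)ι(b) + ι(a)φ(b) + φ(a)Δφ(b)) on a dense unital *-subalgebra A₀ of a unital C*-algebra A, and suppose every matrix algebra M_n(A₀) is square-root closed (M_n(A₀)₊ = {B² : B ∈ M_n(A₀)₊}). If ω is a positive normal functional on B(k̂), then the operator μ = (id_A ⊗ ω) ∘ φ with domain A₀ is dissipative. -/
/-!
Fix `a ∈ A₀` and a state `g` of `A` with `g (a⋆a) = ‖a‖²` (Hahn–Banach applied to `a⋆a + 1`,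
then symmetrised so that `g` becomes a positive functional).  Square-root closure writes
`‖a‖² - a⋆a = r⋆r` with `r ∈ A₀`; since `g (r⋆r) = 0`, Cauchy–Schwarz kills every `g (x r)` and
`g (r⋆x)`, so the inequality `μ(x)⋆x + x⋆μ(x) ≤ μ(x⋆x)` at `x = r`, together with `μ 1 = 0`,
gives `Re g (μ(a⋆a)) ≤ 0`, and at `x = a` it gives `Re g (a⋆μ(a)) ≤ 0`.  Hence
`λ‖a‖² ≤ Re g (a⋆(λa - μ(a))) ≤ ‖a‖ ‖λa - μ(a)‖`.  For `μ = E ∘ φ` the inequality comes from the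
structure equation: `μ(a⋆a) - μ(a)⋆a - a⋆μ(a) = E (φ(a)⋆ Δ φ(a)) ≥ 0`.
-/

open ComplexOrder ComplexStarModule WithConv

lemma Complex.eq_ofReal_of_norm_le_of_le_re {z : ℂ} {r : ℝ} (hz : ‖z‖ ≤ r) (hr : r ≤ z.re) :
    z = r := by
  have hre : z.re = r := le_antisymm ((re_le_norm z).trans hz) hr
  have hnorm : z.re = ‖z‖ := le_antisymm (re_le_norm z) (hz.trans hr)
  rw [← hre]
  exact eq_re_of_ofReal_le (r := 0) (by simpa using re_eq_norm.mp hnorm)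

lemma realPart_toConv_apply_of_isSelfAdjoint {A : Type*} [AddCommGroup A] [Module ℂ A]
    [StarAddMonoid A] [StarModule ℂ A] (f : A →ₗ[ℂ] ℂ) {x : A} (hx : IsSelfAdjoint x) :
    (ℜ (toConv f) : WithConv (A →ₗ[ℂ] ℂ)) x = (f x).re := by
  simp [realPart_apply_coe, hx.star_eq, Complex.re_eq_add_conj]
  ring

namespace PositiveLinearMap

variable {A : Type*} [NonUnitalCStarAlgebra A] [PartialOrder A] [StarOrderedRing A]

lemma norm_apply_star_mul_sq_le (g : A →ₚ[ℂ] ℂ) (x y : A) :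
    ‖g (star x * y)‖ ^ 2 ≤ (g (star x * x)).re * (g (star y * y)).re := by
  have hsq (z : A) : ‖g.toPreGNS z‖ ^ 2 = (g (star z * z)).re := by
    rw [preGNS_norm_def,
      Real.sq_sqrt (Complex.nonneg_iff.mp (g.map_nonneg (star_mul_self_nonneg _))).1]
    rfl
  rw [← hsq, ← hsq, ← mul_pow]
  exact pow_le_pow_left₀ (norm_nonneg _) (norm_inner_le_norm (g.toPreGNS x) (g.toPreGNS y)) 2

lemma apply_star_mul_eq_zero (g : A →ₚ[ℂ] ℂ) {r : A} (hr : g (star r * r) = 0) (y : A) :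
    g (star r * y) = 0 := by
  have := g.norm_apply_star_mul_sq_le r y
  rw [hr, Complex.zero_re, zero_mul] at this
  exact norm_eq_zero.mp (pow_eq_zero_iff two_ne_zero |>.mp (le_antisymm this (by positivity)))

lemma apply_mul_eq_zero (g : A →ₚ[ℂ] ℂ) {r : A} (hr : g (star r * r) = 0) (y : A) :
    g (y * r) = 0 := by
  rw [← star_star (y * r), map_star, star_mul, g.apply_star_mul_eq_zero hr, star_zero]

end PositiveLinearMap

section State

variable {A : Type*} [CStarAlgebra A] [PartialOrder A] [StarOrderedRing A]

lemma PositiveLinearMap.norm_apply_star_mul_le (g : A →ₚ[ℂ] ℂ) (hg : g 1 = 1) (x y : A) :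
    ‖g (star x * y)‖ ≤ ‖x‖ * ‖y‖ := by
  have hbound (z : A) : (g (star z * z)).re ≤ ‖z‖ ^ 2 := by
    calc (g (star z * z)).re ≤ ‖g (star z * z)‖ := Complex.re_le_norm _
      _ ≤ ‖g 1‖ * ‖star z * z‖ := g.norm_apply_le_of_nonneg _ (star_mul_self_nonneg z)
      _ = ‖z‖ ^ 2 := by rw [hg, norm_one, one_mul, CStarRing.norm_star_mul_self, sq]
  have hnonneg (z : A) : 0 ≤ (g (star z * z)).re :=
    (Complex.nonneg_iff.mp (g.map_nonneg (star_mul_self_nonneg z))).1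
  refine pow_le_pow_iff_left₀ (norm_nonneg _) (by positivity) two_ne_zero |>.mp ?_
  calc ‖g (star x * y)‖ ^ 2 ≤ (g (star x * x)).re * (g (star y * y)).re :=
        g.norm_apply_star_mul_sq_le x y
    _ ≤ ‖x‖ ^ 2 * ‖y‖ ^ 2 := mul_le_mul (hbound x) (hbound y) (hnonneg y) (sq_nonneg _)
    _ = (‖x‖ * ‖y‖) ^ 2 := (mul_pow _ _ _).symm

lemma norm_add_one_of_nonneg [Nontrivial A] {b : A} (hb : 0 ≤ b) : ‖b + 1‖ = ‖b‖ + 1 := by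
  refine le_antisymm ((norm_add_le _ _).trans_eq (by rw [norm_one])) ?_
  have hspec : ‖b‖ + 1 ∈ spectrum ℝ (b + 1) := by
    rw [spectrum.add_mem_iff]
    simpa using CStarAlgebra.norm_mem_spectrum_of_nonneg hb
  simpa [abs_of_nonneg (by positivity : 0 ≤ ‖b‖ + 1)] using spectrum.norm_le_norm_of_mem hspec

lemma exists_norm_le_one_apply_one_apply_eq_norm [Nontrivial A] {b : A} (hb : 0 ≤ b) :
    ∃ f : StrongDual ℂ A, ‖f‖ ≤ 1 ∧ f 1 = 1 ∧ f b = ‖b‖ := by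
  obtain ⟨f, hf, hfb1⟩ := exists_dual_vector'' ℂ (b + 1)
  have hb' : ‖f b‖ ≤ ‖b‖ := (f.le_opNorm b).trans (mul_le_of_le_one_left (norm_nonneg b) hf)
  have h1' : ‖f 1‖ ≤ 1 := (f.le_opNorm 1).trans (by simpa using hf)
  have hsum : (f b).re + (f 1).re = ‖b‖ + 1 := by
    simpa [norm_add_one_of_nonneg hb] using congrArg Complex.re hfb1
  refine ⟨f, hf, ?_, ?_⟩
  · simpa using Complex.eq_ofReal_of_norm_le_of_le_re h1'
      (by linarith [(f b).re_le_norm, (f 1).re_le_norm])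
  · exact Complex.eq_ofReal_of_norm_le_of_le_re hb'
      (by linarith [(f b).re_le_norm, (f 1).re_le_norm])

lemma re_apply_nonneg_of_norm_le_one {f : StrongDual ℂ A} (hf : ‖f‖ ≤ 1) (hf1 : f 1 = 1)
    {x : A} (hx : 0 ≤ x) : 0 ≤ (f x).re := by
  have hle : ‖algebraMap ℝ A ‖x‖ - x‖ ≤ ‖x‖ := by
    rw [CStarAlgebra.norm_le_iff_le_algebraMap _ (norm_nonneg x)
      (sub_nonneg.mpr hx.isSelfAdjoint.le_algebraMap_norm_self)]
    exact sub_le_self _ hx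
  have hfx : f (algebraMap ℝ A ‖x‖ - x) = ‖x‖ - f x := by
    simp [Algebra.algebraMap_eq_smul_one, ← Complex.coe_smul, hf1]
  have := ((f _).re_le_norm.trans (f.le_opNorm _)).trans
    ((mul_le_of_le_one_left (norm_nonneg _) hf).trans hle)
  rw [hfx] at this
  simpa using this

/-- The Hahn–Banach functional `f` is replaced by its real part `z ↦ (f z + conj (f z⋆)) / 2`,
which agrees with `Re f` on selfadjoint elements and is therefore positive. -/
lemma exists_positiveLinearMap_apply_one_apply_eq_norm [Nontrivial A] {b : A} (hb : 0 ≤ b) :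
    ∃ g : A →ₚ[ℂ] ℂ, g 1 = 1 ∧ g b = ‖b‖ := by
  obtain ⟨f, hf, hf1, hfb⟩ := exists_norm_le_one_apply_one_apply_eq_norm hb
  have hre {x : A} (hx : IsSelfAdjoint x) :=
    realPart_toConv_apply_of_isSelfAdjoint (f : A →ₗ[ℂ] ℂ) hx
  refine ⟨.mk₀ (ℜ (toConv (f : A →ₗ[ℂ] ℂ)) : WithConv (A →ₗ[ℂ] ℂ)).ofConv fun x hx => ?_, ?_, ?_⟩
  · rw [hre hx.isSelfAdjoint]
    exact_mod_cast re_apply_nonneg_of_norm_le_one hf hf1 hx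
  · exact (hre (.one A)).trans (by simp [hf1])
  · exact (hre hb.isSelfAdjoint).trans (by simp [hfb])

end State

section Dissipative

variable {A : Type*} [CStarAlgebra A] [PartialOrder A] [StarOrderedRing A]

lemma mul_norm_le_norm_smul_sub_of_re_apply_star_mul_nonpos (g : A →ₚ[ℂ] ℂ) (hg : g 1 = 1)
    {a y : A} (ha : g (star a * a) = ‖star a * a‖) (hy : (g (star a * y)).re ≤ 0) (lam : ℝ) :
    lam * ‖a‖ ≤ ‖(lam : ℂ) • a - y‖ := by
  rcases (norm_nonneg a).eq_or_lt with ha0 | ha0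
  · rw [← ha0, mul_zero]
    exact norm_nonneg _
  refine le_of_mul_le_mul_left ?_ ha0
  calc ‖a‖ * (lam * ‖a‖) = lam * (g (star a * a)).re := by
        rw [ha, Complex.ofReal_re, CStarRing.norm_star_mul_self]; ring
    _ ≤ (g (star a * ((lam : ℂ) • a - y))).re := by
        simpa only [mul_sub, mul_smul_comm, map_sub, map_smul, smul_eq_mul, Complex.sub_re,
          Complex.mul_re, Complex.ofReal_re, Complex.ofReal_im, zero_mul, sub_zero,
          le_sub_self_iff] using hy
    _ ≤ ‖g (star a * ((lam : ℂ) • a - y))‖ := Complex.re_le_norm _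
    _ ≤ ‖a‖ * ‖(lam : ℂ) • a - y‖ := g.norm_apply_star_mul_le hg _ _

lemma re_apply_star_mul_map_nonpos (A₀ : StarSubalgebra ℂ A)
    (hsqrt : ∀ m ∈ A₀, 0 ≤ m → ∃ r ∈ A₀, m = star r * r) (μ : A₀ →ₗ[ℂ] A) (hμ1 : μ 1 = 0)
    (hμ : ∀ a : A₀, star (μ a) * a + star (a : A) * μ a ≤ μ (star a * a))
    (g : A →ₚ[ℂ] ℂ) (hg : g 1 = 1) (a : A₀) (ha : g (star (a : A) * a) = ‖star (a : A) * a‖) :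
    (g (star (a : A) * μ a)).re ≤ 0 := by
  set m : A₀ := algebraMap ℂ A₀ ‖star (a : A) * a‖ - star a * a
  have hm : (0 : A) ≤ m := by
    simpa [m, Algebra.algebraMap_eq_smul_one, ← Complex.coe_smul]
      using (star_mul_self_nonneg (a : A)).isSelfAdjoint.le_algebraMap_norm_self
  obtain ⟨r, hrA₀, hmr⟩ := hsqrt m m.2 hm
  have hgr : g (star r * r) = 0 := by
    rw [← hmr]
    simp [m, Algebra.algebraMap_eq_smul_one, hg, ha]
  have hμr : star (μ ⟨r, hrA₀⟩) * r + star r * μ ⟨r, hrA₀⟩ ≤ - μ (star a * a) := by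
    have hm' : star ⟨r, hrA₀⟩ * ⟨r, hrA₀⟩ = m := Subtype.ext hmr.symm
    simpa [hm', m, Algebra.algebraMap_eq_smul_one, hμ1] using hμ ⟨r, hrA₀⟩
  have hgμ : (g (μ (star a * a))).re ≤ 0 := by
    simpa [g.apply_mul_eq_zero hgr, g.apply_star_mul_eq_zero hgr] using
      Complex.re_le_re (OrderHomClass.mono g hμr)
  have hconj : g (star (μ a) * a) = star (g (star (a : A) * μ a)) := by
    rw [← map_star g, star_mul, star_star]
  have := Complex.re_le_re (OrderHomClass.mono g (hμ a))
  simp only [map_add, Complex.add_re, hconj, Complex.star_def, Complex.conj_re] at this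
  linarith

theorem mul_norm_le_norm_smul_sub_of_le_map_star_mul (A₀ : StarSubalgebra ℂ A)
    (hsqrt : ∀ m ∈ A₀, 0 ≤ m → ∃ r ∈ A₀, m = star r * r) (μ : A₀ →ₗ[ℂ] A) (hμ1 : μ 1 = 0)
    (hμ : ∀ a : A₀, star (μ a) * a + star (a : A) * μ a ≤ μ (star a * a)) (a : A₀) (lam : ℝ) :
    lam * ‖(a : A)‖ ≤ ‖(lam : ℂ) • (a : A) - μ a‖ := by
  rcases subsingleton_or_nontrivial A with hA | hA
  · simp [Subsingleton.elim (a : A) 0]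
  obtain ⟨g, hg1, hga⟩ :=
    exists_positiveLinearMap_apply_one_apply_eq_norm (star_mul_self_nonneg (a : A))
  exact mul_norm_le_norm_smul_sub_of_re_apply_star_mul_nonpos g hg1 hga
    (re_apply_star_mul_map_nonpos A₀ hsqrt μ hμ1 hμ g hg1 a hga) lam

end Dissipative

lemma exists_eq_star_mul_self_of_sqrt_closed {A : Type*} [CStarAlgebra A] [PartialOrder A]
    [StarOrderedRing A] {A₀ : StarSubalgebra ℂ A}
    (hsqrt : ∀ M : Matrix (Fin 1) (Fin 1) A, (∀ i j, M i j ∈ A₀) →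
      (∃ N : Matrix (Fin 1) (Fin 1) A, M = star N * N) →
      ∃ R : Matrix (Fin 1) (Fin 1) A, (∀ i j, R i j ∈ A₀) ∧
        (∃ C : Matrix (Fin 1) (Fin 1) A, R = star C * C) ∧ M = R * R)
    {m : A} (hm : m ∈ A₀) (hm0 : 0 ≤ m) : ∃ r ∈ A₀, m = star r * r := by
  obtain ⟨R, hRA₀, ⟨C, hC⟩, hMR⟩ := hsqrt (.of fun _ _ => m) (fun _ _ => hm)
    ⟨.of fun _ _ => CFC.sqrt m, by
      ext
      simp [Matrix.mul_apply, Matrix.star_apply, (CFC.sqrt_nonneg m).star_eq,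
        CFC.sqrt_mul_sqrt_self m hm0]⟩
  have hRsa : IsSelfAdjoint R := hC ▸ .star_mul_self C
  have hR : star (R 0 0) = R 0 0 := by rw [← Matrix.star_apply, hRsa.star_eq]
  refine ⟨R 0 0, hRA₀ 0 0, ?_⟩
  simpa [Matrix.mul_apply, hR] using congrFun₂ hMR 0 0

lemma le_slice_structureMap_star_mul {A B : Type*} [Ring A] [StarRing A] [Algebra ℂ A]
    [StarModule ℂ A] [PartialOrder A] [StarOrderedRing A]
    [CStarAlgebra B] [PartialOrder B] [StarOrderedRing B]
    (ι : A →⋆ₐ[ℂ] B) {Δ : B} (hΔ : IsStarProjection Δ) {A₀ : StarSubalgebra ℂ A}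
    (φ : A₀ →ₗ[ℂ] B) (hherm : ∀ a : A₀, φ (star a) = star (φ a))
    (hmult : ∀ a b : A₀, φ (a * b) = φ a * ι (b : A) + ι (a : A) * φ b + φ a * Δ * φ b)
    (E : B →ₚ[ℂ] A) (hEl : ∀ (x : B) (a : A), E (ι a * x) = a * E x)
    (hEr : ∀ (x : B) (a : A), E (x * ι a) = E x * a) (a : A₀) :
    star (E (φ a)) * a + star (a : A) * E (φ a) ≤ E (φ (star a * a)) := by
  rw [hmult, hherm, map_add, map_add, hEr, hEl, map_star E, StarMemClass.coe_star]
  exact le_add_of_nonneg_right (E.map_nonneg (star_left_conjugate_nonneg hΔ.nonneg _))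

theorem structure_map_slice_dissipative_general
    {A : Type*} [NormedRing A] [StarRing A] [CStarRing A] [NormedAlgebra ℂ A]
    [CompleteSpace A] [StarModule ℂ A] [PartialOrder A] [StarOrderedRing A]
    {B : Type*} [NormedRing B] [StarRing B] [CStarRing B] [NormedAlgebra ℂ B]
    [CompleteSpace B] [StarModule ℂ B] [PartialOrder B] [StarOrderedRing B]
    (ι : A →⋆ₐ[ℂ] B)
    (Δ : B) (hΔstar : star Δ = Δ) (hΔidem : Δ * Δ = Δ)
    (A₀ : StarSubalgebra ℂ A)
    (hsqrt : ∀ (n : ℕ) (M : Matrix (Fin n) (Fin n) A),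
      (∀ i j, M i j ∈ A₀) → (∃ N : Matrix (Fin n) (Fin n) A, M = star N * N) →
      ∃ R : Matrix (Fin n) (Fin n) A, (∀ i j, R i j ∈ A₀) ∧
        (∃ C : Matrix (Fin n) (Fin n) A, R = star C * C) ∧ M = R * R)
    (φ : A₀ →ₗ[ℂ] B)
    (hherm : ∀ a : A₀, φ (star a) = star (φ a))
    (hone : φ 1 = 0)
    (hmult : ∀ a b : A₀, φ (a * b) = φ a * ι (b : A) + ι (a : A) * φ b + φ a * Δ * φ b)
    (E : B →ₗ[ℂ] A)
    (hEpos : ∀ x : B, 0 ≤ x → 0 ≤ E x)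
    (hEl : ∀ (x : B) (a : A), E (ι a * x) = a * E x)
    (hEr : ∀ (x : B) (a : A), E (x * ι a) = E x * a) :
    ∀ (a : A₀) (lam : ℝ), 0 < lam →
      lam * ‖(a : A)‖ ≤ ‖(lam : ℂ) • (a : A) - E (φ a)‖ := by
  let _ : CStarAlgebra A := { ‹NormedRing A›, ‹StarRing A›, ‹CompleteSpace A›, ‹CStarRing A›,
    ‹NormedAlgebra ℂ A›, ‹StarModule ℂ A› with }
  let _ : CStarAlgebra B := { ‹NormedRing B›, ‹StarRing B›, ‹CompleteSpace B›, ‹CStarRing B›,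
    ‹NormedAlgebra ℂ B›, ‹StarModule ℂ B› with }
  intro a lam _
  exact mul_norm_le_norm_smul_sub_of_le_map_star_mul A₀
    (fun _ hm hm0 => exists_eq_star_mul_self_of_sqrt_closed (hsqrt 1) hm hm0) (E ∘ₗ φ)
    (by simp [hone])
    (le_slice_structureMap_star_mul ι ⟨hΔidem, hΔstar⟩ φ hherm hmult (.mk₀ E hEpos) hEl hEr)
    a lam

/-- Let `φ` be a structure map (hermitian, `φ(1) = 0`, and
`φ(ab) = φ(a)ι(b) + ι(a)φ(b) + φ(a)Δφ(b)`) on a dense unital ⋆-subalgebra `A₀` of a unital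
C⋆-algebra `A`, with values in a unital C⋆-algebra `B` playing the role of `A ⊗ B(k̂)`
(with ampliation `ι` and ampliated projection `Δ`), and suppose that every matrix algebra
`M_n(A₀)` is square-root closed.  If `ω` is a positive normal functional on `B(k̂)` — whose
slice `E = id_A ⊗ ω : B → A` is a positive `A`-bimodule map — then the operator
`μ = E ∘ φ` with domain `A₀` is dissipative: `λ‖a‖ ≤ ‖λa − μ(a)‖` for all `λ > 0`. -/
theorem structure_map_slice_dissipative
    {A : Type*} [NormedRing A] [StarRing A] [CStarRing A] [NormedAlgebra ℂ A]
    [CompleteSpace A] [StarModule ℂ A] [PartialOrder A] [StarOrderedRing A]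
    {B : Type*} [NormedRing B] [StarRing B] [CStarRing B] [NormedAlgebra ℂ B]
    [CompleteSpace B] [StarModule ℂ B] [PartialOrder B] [StarOrderedRing B]
    (ι : A →⋆ₐ[ℂ] B)
    (Δ : B) (hΔstar : star Δ = Δ) (hΔidem : Δ * Δ = Δ)
    (hΔcomm : ∀ a : A, Δ * ι a = ι a * Δ)
    (A₀ : StarSubalgebra ℂ A)
    (hdense : Dense (A₀ : Set A))
    (hsqrt : ∀ (n : ℕ) (M : Matrix (Fin n) (Fin n) A),
      (∀ i j, M i j ∈ A₀) → (∃ N : Matrix (Fin n) (Fin n) A, M = star N * N) →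
      ∃ R : Matrix (Fin n) (Fin n) A, (∀ i j, R i j ∈ A₀) ∧
        (∃ C : Matrix (Fin n) (Fin n) A, R = star C * C) ∧ M = R * R)
    (φ : A₀ →ₗ[ℂ] B)
    (hherm : ∀ a : A₀, φ (star a) = star (φ a))
    (hone : φ 1 = 0)
    (hmult : ∀ a b : A₀, φ (a * b) = φ a * ι (b : A) + ι (a : A) * φ b + φ a * Δ * φ b)
    (E : B →ₗ[ℂ] A)
    (hEpos : ∀ x : B, 0 ≤ x → 0 ≤ E x)
    (hEl : ∀ (x : B) (a : A), E (ι a * x) = a * E x)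
    (hEr : ∀ (x : B) (a : A), E (x * ι a) = E x * a) :
    ∀ (a : A₀) (lam : ℝ), 0 < lam →
      lam * ‖(a : A)‖ ≤ ‖(lam : ℂ) • (a : A) - E (φ a)‖ :=
  structure_map_slice_dissipative_general ι Δ hΔstar hΔidem A₀ hsqrt φ hherm hone hmult E hEpos hEl
    hEr
end
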